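/- Let H be a pseudoexpander. For any pseudomatching M of H, the 0-1 random variables {X_{i,j} : {t_i,t_j} ∈ M} on the probability space on SAT(H) are mutually independent. -/

import Mathlib

open scoped Classical

namespace NBPPaper

/-! ### Literals and assignments.
A literal is a pair `(x, b)` of a variable and a polarity (`true` = positive literal).
A set of literals is a `Finset (Var × Bool)`. -/

/-- A set of literals is consistent: no variable occurs both positively and negatively. -/
def Consistent {Var : Type} (S : Finset (Var × Bool)) : Prop :=
  ∀ x : Var, ¬((x, true) ∈ S ∧ (x, false) ∈ S)

/-- `S` is a set of literals over the variable set `W`. -/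
def LitsOver {Var : Type} (W : Finset Var) (S : Finset (Var × Bool)) : Prop :=
  Consistent S ∧ ∀ l ∈ S, l.1 ∈ W

/-- `S` is an assignment of exactly the variables of `W`:
it contains exactly one literal of each variable of `W` and nothing else. -/
def AssignsExactly {Var : Type} (W : Finset Var) (S : Finset (Var × Bool)) : Prop :=
  (∀ l ∈ S, l.1 ∈ W) ∧ ∀ x ∈ W, ∃! b : Bool, (x, b) ∈ S

/-- Satisfaction of a CNF, given as a set of clauses (each clause a set of literals):
every clause contains a literal of `S`. -/
def SatCNF {V : Type} (φ : Set (Finset (V × Bool))) (S : Finset (V × Bool)) : Prop :=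
  ∀ C ∈ φ, ∃ l ∈ C, l ∈ S

/-! ### Nondeterministic branching programs -/

/-- An edge of a nondeterministic branching program over variable type `Var`
with vertex set `Fin n`.  `lab = none` means the edge is unlabelled; the field
`id` allows parallel edges (multigraph). -/
structure NBPEdge (Var : Type) (n : ℕ) where
  src : Fin n
  dst : Fin n
  lab : Option (Var × Bool)
  id : ℕ
deriving DecidableEq

/-- A nondeterministic branching program: a finite DAG (the vertices `Fin n` are
listed in a topological order, i.e. every edge increases the index) with a single
source (the only vertex with no incoming edge) and a single sink (the only vertex
with no outgoing edge). -/
structure NBP (Var : Type) where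
  n : ℕ
  edges : Finset (NBPEdge Var n)
  source : Fin n
  sink : Fin n
  acyc : ∀ e ∈ edges, e.src < e.dst
  source_no_in : ∀ e ∈ edges, e.dst ≠ source
  sink_no_out : ∀ e ∈ edges, e.src ≠ sink
  only_source : ∀ v : Fin n, v ≠ source → ∃ e ∈ edges, e.dst = v
  only_sink : ∀ v : Fin n, v ≠ sink → ∃ e ∈ edges, e.src = v

variable {Var : Type}

/-- The set of literals labelling the edges of a path (a list of edges). -/
def pathLits [DecidableEq Var] {n : ℕ} (p : List (NBPEdge Var n)) : Finset (Var × Bool) :=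
  (p.filterMap NBPEdge.lab).toFinset

/-- The set of variables occurring (as edge labels) on a path. -/
def pathVars [DecidableEq Var] {n : ℕ} (p : List (NBPEdge Var n)) : Finset Var :=
  ((p.filterMap NBPEdge.lab).map Prod.fst).toFinset

/-- The set of vertices visited by a path. -/
def pathVertices {n : ℕ} (p : List (NBPEdge Var n)) : Finset (Fin n) :=
  (p.map NBPEdge.src).toFinset ∪ (p.map NBPEdge.dst).toFinset

/-- The number of occurrences of the variable `x` as an edge label on the path `p`. -/
def occCount [DecidableEq Var] {n : ℕ} (x : Var) (p : List (NBPEdge Var n)) : ℕ :=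
  (p.filterMap NBPEdge.lab).countP (fun l => decide (l.1 = x))

namespace NBP

/-- `p` is a directed path of `Z` from vertex `u` to vertex `v`. -/
def IsPathFrom (Z : NBP Var) (u v : Fin Z.n) (p : List (NBPEdge Var Z.n)) : Prop :=
  p ≠ [] ∧ (∀ e ∈ p, e ∈ Z.edges) ∧ List.Chain' (fun e f => e.dst = f.src) p ∧
    p.head?.map NBPEdge.src = some u ∧ p.getLast?.map NBPEdge.dst = some v

/-- `p` is a source-sink path of `Z`. -/
def IsSourceSink (Z : NBP Var) (p : List (NBPEdge Var Z.n)) : Prop :=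
  Z.IsPathFrom Z.source Z.sink p

/-- A computational path: a source-sink path carrying no two opposite literals. -/
def IsCompPath [DecidableEq Var] (Z : NBP Var) (p : List (NBPEdge Var Z.n)) : Prop :=
  Z.IsSourceSink p ∧ Consistent (pathLits p)

/-- The set `Vars(Z)` of variables whose literals occur on edges of `Z`. -/
def vars [DecidableEq Var] (Z : NBP Var) : Finset Var :=
  Z.edges.biUnion (fun e => (e.lab.map Prod.fst).toFinset)

/-- `Z` is a (syntactic) read-`d`-times NBP. -/
def ReadTimes [DecidableEq Var] (Z : NBP Var) (d : ℕ) : Prop :=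
  ∀ p, Z.IsSourceSink p → ∀ x : Var, occCount x p ≤ d

/-- `Z` is a uniform read-`d`-times NBP: every variable of `Z` occurs exactly `d`
times on every source-sink path. -/
def UniformReadTimes [DecidableEq Var] (Z : NBP Var) (d : ℕ) : Prop :=
  Z.ReadTimes d ∧ ∀ p, Z.IsSourceSink p → ∀ x ∈ Z.vars, occCount x p = d

/-- `Z` computes the Boolean function with variable set `W` whose satisfying
(total) assignments are described by the predicate `F`. -/
def Computes [DecidableEq Var] (Z : NBP Var) (W : Finset Var)
    (F : Finset (Var × Bool) → Prop) : Prop :=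
  Z.vars = W ∧ ∀ S, AssignsExactly W S → (F S ↔ ∃ p, Z.IsCompPath p ∧ pathLits p ⊆ S)

end NBP

/-- `parts` is the partition of the path `p` generated by the vertex set `X`:
`p` is cut into `|X| + 1` consecutive nonempty subpaths whose cut points are
exactly the vertices of `X`. -/
def GeneratesPartition {n : ℕ} (X : Finset (Fin n)) (p : List (NBPEdge Var n))
    (parts : List (List (NBPEdge Var n))) : Prop :=
  p = parts.flatten ∧ parts.length = X.card + 1 ∧ (∀ q ∈ parts, q ≠ []) ∧
    (parts.dropLast.filterMap (fun q => q.getLast?.map NBPEdge.dst)).toFinset = X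

/-- Variables of `Y₁` occur only on parts with even (0-based) index, i.e. odd-numbered
subpaths, and variables of `Y₂` only on parts with odd (0-based) index. -/
def OddEvenSplit [DecidableEq Var] {n : ℕ} (parts : List (List (NBPEdge Var n)))
    (Y₁ Y₂ : Finset Var) : Prop :=
  ∀ k : ℕ, ∀ x ∈ pathVars (parts.getD k []),
    (x ∈ Y₁ → k % 2 = 0) ∧ (x ∈ Y₂ → k % 2 = 1)

/-- The set `X` of vertices of `Z` (containing neither source nor sink) separates the two
disjoint subsets `Y₁, Y₂` of `Vars(Z)`. -/
def NBP.Separates [DecidableEq Var] (Z : NBP Var) (X : Finset (Fin Z.n))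
    (Y₁ Y₂ : Finset Var) : Prop :=
  Disjoint Y₁ Y₂ ∧ Y₁ ⊆ Z.vars ∧ Y₂ ⊆ Z.vars ∧ Z.source ∉ X ∧ Z.sink ∉ X ∧
  ∃ p parts, Z.IsCompPath p ∧ GeneratesPartition X p parts ∧
    (OddEvenSplit parts Y₁ Y₂ ∨ OddEvenSplit parts Y₂ Y₁)

/-! ### Rooted trees -/

/-- A finite rooted tree on (a subset of) the vertex type `V`, given by a parent
function together with a depth function certifying acyclicity. -/
structure RootedTree (V : Type) [DecidableEq V] where
  verts : Finset V
  root : V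
  parent : V → V
  depth : V → ℕ
  root_mem : root ∈ verts
  parent_mem : ∀ v ∈ verts, v ≠ root → parent v ∈ verts
  depth_root : depth root = 0
  depth_parent : ∀ v ∈ verts, v ≠ root → depth v = depth (parent v) + 1

namespace RootedTree

variable {V : Type} [DecidableEq V]

/-- The children of a vertex. -/
def children (T : RootedTree V) (u : V) : Finset V :=
  T.verts.filter (fun v => v ≠ T.root ∧ T.parent v = u)

/-- The leaves of the tree: vertices with no children. -/
def leaves (T : RootedTree V) : Finset V :=
  T.verts.filter (fun v => T.children v = ∅)

/-- The vertex set of the path from the root to `v` (i.e. `v` and all its ancestors). -/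
def pathVerts (T : RootedTree V) (v : V) : Finset V :=
  (Finset.range (T.depth v + 1)).image (fun k => T.parent^[k] v)

/-- The height of the tree: the largest number of vertices on a root-leaf path. -/
def height (T : RootedTree V) : ℕ :=
  (T.verts.sup T.depth) + 1

/-- Every vertex has at most two children. -/
def IsBinary (T : RootedTree V) : Prop :=
  ∀ u ∈ T.verts, (T.children u).card ≤ 2

/-- The tree is extended: none of its leaves has a sibling. -/
def IsExtended (T : RootedTree V) : Prop :=
  ∀ v ∈ T.verts, v ≠ T.root → T.children v = ∅ → T.children (T.parent v) = {v}

/-- The edge set of the tree (as unordered pairs). -/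
def edgeSet (T : RootedTree V) : Finset (Sym2 V) :=
  (T.verts.filter (fun v => v ≠ T.root)).image (fun v => s(v, T.parent v))

end RootedTree

/-! ### Binary-tree-based graphs and pseudoexpanders -/

/-- A binary-tree-based (BTB) graph on the vertex type `V`: an edge-disjoint union of
`m` extended binary rooted trees such that every leaf of one of the trees is a leaf of
exactly two of the trees, any two trees have at most one vertex in common (that vertex
being a leaf of both), and the roots are pairwise distinct. -/
structure BTB (V : Type) [DecidableEq V] [Fintype V] where
  m : ℕ
  tree : Fin m → RootedTree V
  binary : ∀ i, (tree i).IsBinary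
  extended : ∀ i, (tree i).IsExtended
  cover : ∀ v : V, ∃ i, v ∈ (tree i).verts
  edge_disjoint : ∀ i j, i ≠ j → Disjoint ((tree i).edgeSet) ((tree j).edgeSet)
  leaf_two : ∀ i, ∀ v ∈ (tree i).leaves,
    (Finset.univ.filter (fun j => v ∈ (tree j).leaves)).card = 2
  common_le_one : ∀ i j, i ≠ j → ∀ u v,
    u ∈ (tree i).verts → u ∈ (tree j).verts →
    v ∈ (tree i).verts → v ∈ (tree j).verts → u = v
  common_leaf : ∀ i j, i ≠ j → ∀ v, v ∈ (tree i).verts → v ∈ (tree j).verts →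
    v ∈ (tree i).leaves ∧ v ∈ (tree j).leaves
  roots_inj : Function.Injective (fun i => (tree i).root)

namespace BTB

variable {V : Type} [DecidableEq V] [Fintype V]

/-- `ℓ` is the common leaf of the (adjacent) trees `T_i` and `T_j`. -/
def IsCommonLeaf (H : BTB V) (i j : Fin H.m) (ℓ : V) : Prop :=
  i ≠ j ∧ ℓ ∈ (H.tree i).leaves ∧ ℓ ∈ (H.tree j).leaves

/-- The trees `T_i` and `T_j` are adjacent (share a common leaf); equivalently,
`{t_i, t_j}` is a pseudoedge of `H`. -/
def Adjacent (H : BTB V) (i j : Fin H.m) : Prop :=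
  ∃ ℓ, H.IsCommonLeaf i j ℓ

/-- The pseudodegree of the root `t_i`: the number of pseudoedges containing it. -/
noncomputable def pseudodegree (H : BTB V) (i : Fin H.m) : ℕ :=
  (Finset.univ.filter (fun j => H.Adjacent i j)).card

/-- The set of root vertices of `H`. -/
def rootSet (H : BTB V) : Finset V :=
  Finset.univ.image (fun i => (H.tree i).root)

/-- A pseudomatching: a set of pseudoedges (recorded as ordered pairs of root indices
with `i < j`) no two of which share an end. -/
def IsPseudomatching (H : BTB V) (M : Finset (Fin H.m × Fin H.m)) : Prop :=
  (∀ e ∈ M, e.1 < e.2 ∧ H.Adjacent e.1 e.2) ∧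
  ∀ e ∈ M, ∀ f ∈ M, e ≠ f → e.1 ≠ f.1 ∧ e.1 ≠ f.2 ∧ e.2 ≠ f.1 ∧ e.2 ≠ f.2

/-- A pseudomatching between the disjoint sets `U` and `W` of roots (given by their
indices): every pseudoedge of `M` has one end in `U` and the other in `W`. -/
def IsPseudomatchingBetween (H : BTB V) (M : Finset (Fin H.m × Fin H.m))
    (U W : Finset (Fin H.m)) : Prop :=
  H.IsPseudomatching M ∧ ∀ e ∈ M, (e.1 ∈ U ∧ e.2 ∈ W) ∨ (e.1 ∈ W ∧ e.2 ∈ U)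

/-- The set `⋃M` of root vertices matched by the pseudomatching `M`. -/
def matchingRoots (H : BTB V) (M : Finset (Fin H.m × Fin H.m)) : Finset V :=
  M.biUnion (fun e => {(H.tree e.1).root, (H.tree e.2).root})

/-- The vertex set `V(P_{i,j})` of the path connecting the roots `t_i` and `t_j`
through their common leaf `ℓ`. -/
def clauseVerts (H : BTB V) (i j : Fin H.m) (ℓ : V) : Finset V :=
  (H.tree i).pathVerts ℓ ∪ (H.tree j).pathVerts ℓ

/-- `S` satisfies the monotone CNF `φ_H`. -/
def SatisfiesPhi (H : BTB V) (S : Finset (V × Bool)) : Prop :=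
  ∀ i j ℓ, H.IsCommonLeaf i j ℓ → ∃ v ∈ H.clauseVerts i j ℓ, (v, true) ∈ S

/-- `S` falsifies no clause of `φ_H`. -/
def FalsifiesNoClause (H : BTB V) (S : Finset (V × Bool)) : Prop :=
  ∀ i j ℓ, H.IsCommonLeaf i j ℓ → ¬(∀ v ∈ H.clauseVerts i j ℓ, (v, false) ∈ S)

/-- `H` is a pseudoexpander. -/
def IsPseudoexpander (H : BTB V) : Prop :=
  (∀ i, ((H.tree i).height : ℝ) ≤ Real.logb 2 H.m / 4.9 + 3) ∧
  ∀ U W : Finset (Fin H.m), Disjoint U W →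
    (H.m : ℝ) ^ (0.999 : ℝ) ≤ U.card → (H.m : ℝ) ^ (0.999 : ℝ) ≤ W.card →
    ∃ M, H.IsPseudomatchingBetween M U W ∧ (H.m : ℝ) ^ (0.999 : ℝ) / 3 ≤ M.card

/-! #### The probability space on the satisfying assignments of `φ_H` -/

/-- The set `SAT(H)` of satisfying assignments of `φ_H` (total assignments of the
variables `V(H)` satisfying every clause). -/
noncomputable def SATH (H : BTB V) : Finset (Finset (V × Bool)) :=
  Finset.univ.filter (fun S => AssignsExactly Finset.univ S ∧ H.SatisfiesPhi S)

/-- `Fix(S)`: the set of leaf variables `ℓ_{i,j}` occurring positively in `S` such that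
all the other variables of the clause `C_{i,j}` occur negatively in `S`. -/
def Fix (H : BTB V) (S : Finset (V × Bool)) : Set V :=
  {ℓ | ∃ i j, H.IsCommonLeaf i j ℓ ∧ (ℓ, true) ∈ S ∧
      ∀ v ∈ H.clauseVerts i j ℓ, v ≠ ℓ → (v, false) ∈ S}

/-- The probability weight of `S`: `(1/2) ^ |V(H) \ Fix(S)|`. -/
noncomputable def weight (H : BTB V) (S : Finset (V × Bool)) : ℝ :=
  (1 / 2 : ℝ) ^ (Fintype.card V - (H.Fix S).ncard)

/-- The probability of the event `E` in the probability space on `SAT(H)`. -/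
noncomputable def Pr (H : BTB V) (E : Finset (V × Bool) → Prop) : ℝ :=
  ∑ S ∈ H.SATH.filter E, H.weight S

/-- `|S \ Fix(S)|`: the number of literals of `S` that are not fixed. -/
noncomputable def nonFixedCount (H : BTB V) (S : Finset (V × Bool)) : ℕ :=
  (S.filter (fun l => ¬(l.2 = true ∧ l.1 ∈ H.Fix S))).card

/-- `v` and `w` are siblings (in one of the trees of `H`). -/
def Sibling (H : BTB V) (v w : V) : Prop :=
  ∃ k, v ∈ (H.tree k).verts ∧ w ∈ (H.tree k).verts ∧
    v ≠ (H.tree k).root ∧ w ≠ (H.tree k).root ∧ v ≠ w ∧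
    (H.tree k).parent v = (H.tree k).parent w

/-- `S` respects the pseudoedge `{t_i, t_j}`: all non-root variables of `C_{i,j}` occur
negatively in `S` and the siblings of all internal variables of `C_{i,j}` occur
positively in `S`. -/
def Respects (H : BTB V) (i j : Fin H.m) (S : Finset (V × Bool)) : Prop :=
  ∃ ℓ, H.IsCommonLeaf i j ℓ ∧
    (∀ v ∈ H.clauseVerts i j ℓ,
      v ≠ (H.tree i).root → v ≠ (H.tree j).root → (v, false) ∈ S) ∧
    (∀ v ∈ H.clauseVerts i j ℓ,
      v ≠ (H.tree i).root → v ≠ (H.tree j).root → v ≠ ℓ →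
      ∀ w, H.Sibling v w → (w, true) ∈ S)

/-- `S` is `η`-comfortable w.r.t. the pseudomatching `M`: `S` falsifies no clause of
`φ_H` and respects at least `η·|M|` pseudoedges of `M`. -/
noncomputable def Comfortable (H : BTB V) (M : Finset (Fin H.m × Fin H.m)) (η : ℝ)
    (S : Finset (V × Bool)) : Prop :=
  H.FalsifiesNoClause S ∧
    η * M.card ≤ ((M.filter (fun e => H.Respects e.1 e.2 S)).card : ℝ)

/-- `S` is a guarded set of literals. -/
def Guarded (H : BTB V) (S : Finset (V × Bool)) : Prop :=
  Consistent S ∧ ∀ i j ℓ, H.IsCommonLeaf i j ℓ →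
    ((ℓ, true) ∉ S ∧ (ℓ, false) ∉ S) ∨
    (∃ v ∈ H.clauseVerts i j ℓ, v ≠ ℓ ∧ (v, true) ∈ S) ∨
    ((ℓ, true) ∈ S ∧ ∀ v ∈ H.clauseVerts i j ℓ, v ≠ ℓ → (v, false) ∈ S)

/-! #### Matching CNFs and matching OR-CNFs -/

/-- The 'half clause' `C^{1/2}_{i,j}`: the positive clause on the vertices of the path
from `t_i` (if `side = true`) or from `t_j` (if `side = false`) to the common leaf `ℓ`. -/
def halfClause (H : BTB V) (i j : Fin H.m) (ℓ : V) (side : Bool) : Finset (V × Bool) :=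
  (if side then (H.tree i).pathVerts ℓ else (H.tree j).pathVerts ℓ).image (fun v => (v, true))

/-- The matching CNF w.r.t. `M` determined by the side choice `c`: one half clause per
pseudoedge of `M`.  The formulas of `CNF(M)` are exactly the CNFs `matchingCNF H M c`. -/
def matchingCNF (H : BTB V) (M : Finset (Fin H.m × Fin H.m))
    (c : Fin H.m × Fin H.m → Bool) : Set (Finset (V × Bool)) :=
  {C | ∃ e ∈ M, ∃ ℓ, H.IsCommonLeaf e.1 e.2 ℓ ∧ C = H.halfClause e.1 e.2 ℓ (c e)}

/-- A matching OR-CNF w.r.t. `M` is determined by a map `Ψ` assigning to each assignment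
`S₀` of the variables `V(H) \ ⋃M` a matching CNF (given by its side choice `Ψ S₀`);
the formula is `⋁_{S₀} (Conj(S₀) ∧ matchingCNF H M (Ψ S₀))`.  `S` satisfies it iff for
(the) `S₀ ⊆ S`, `S` satisfies the corresponding matching CNF. -/
def SatORCNF (H : BTB V) (M : Finset (Fin H.m × Fin H.m))
    (Ψ : Finset (V × Bool) → (Fin H.m × Fin H.m) → Bool) (S : Finset (V × Bool)) : Prop :=
  ∃ S₀, AssignsExactly (Finset.univ \ H.matchingRoots M) S₀ ∧ S₀ ⊆ S ∧
    SatCNF (H.matchingCNF M (Ψ S₀)) S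

/-- `X` is an `(a, b)`-determining set for the NBP `Z` computing `φ_H`. -/
def IsDeterminingSet (H : BTB V) (Z : NBP V) (a b : ℝ) (X : Finset (Fin Z.n)) : Prop :=
  (X.card : ℝ) ≤ a ∧
  ∃ M : Finset (Fin H.m × Fin H.m), H.IsPseudomatching M ∧ b ≤ (M.card : ℝ) ∧
    ∃ Ψ : Finset (V × Bool) → (Fin H.m × Fin H.m) → Bool,
      ∀ p, Z.IsCompPath p → X ⊆ pathVertices p → H.SatORCNF M Ψ (pathLits p)

end BTB

/-! Flip an independent fair coin for every vertex of `H`, then set to true each leaf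
`ℓ_{i,j}` all of whose clause-mates in `C_{i,j}` came up false. The result lies in `SAT(H)`,
and `S` is hit by exactly the `2 ^ |Fix(S)|` coin vectors that agree with `S` off `Fix(S)`, so
this pushes the uniform distribution forward to the probability space on `SAT(H)`. After the
repair, `X_{i,j}` reads only the coins on `T_i ∪ T_j` other than the leaves `ℓ ≠ ℓ_{i,j}`; for
the pseudoedges of a pseudomatching these sets of coins are pairwise disjoint, and events
determined by disjoint sets of independent coins are independent. -/

open Finset Function

section BooleanCube

variable {α : Type*} [Fintype α] [DecidableEq α]

noncomputable def cubeProb (P : (α → Bool) → Prop) : ℝ :=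
  #{g | P g} / 2 ^ Fintype.card α

lemma card_filter_eqOn_compl (t : Finset α) (f : α → Bool) :
    #{g : α → Bool | ∀ a ∉ t, g a = f a} = 2 ^ #t := by
  have : ({g : α → Bool | ∀ a ∉ t, g a = f a} : Finset _) =
      Fintype.piFinset fun a => if a ∈ t then univ else {f a} := by
    ext g
    simp only [mem_filter, mem_univ, true_and, Fintype.mem_piFinset]
    refine forall_congr' fun a => ?_
    split_ifs with ha <;> simp [ha]
  rw [this, Fintype.card_piFinset]
  simp [apply_ite card, prod_ite_mem]

/-- The involution `(g, h) ↦ (s.piecewise g h, s.piecewise h g)` matches the pairs with `P g`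
and `Q h` to the pairs with `P g ∧ Q g`. -/
lemma card_filter_and_mul {s : Finset α} {P Q : (α → Bool) → Prop}
    (hP : DependsOn P s) (hQ : DependsOn Q (↑s)ᶜ) :
    #{g | P g ∧ Q g} * 2 ^ Fintype.card α = #{g | P g} * #{g | Q g} := by
  have hcard : (2 : ℕ) ^ Fintype.card α = #(univ : Finset (α → Bool)) := by simp
  rw [hcard, ← card_product, ← card_product]
  let σ : (α → Bool) × (α → Bool) → (α → Bool) × (α → Bool) :=
    fun p => (s.piecewise p.1 p.2, s.piecewise p.2 p.1)
  have hσ : ∀ p, σ (σ p) = p := by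
    rintro ⟨g, h⟩
    ext a <;> by_cases ha : a ∈ s <;> simp [σ, ha]
  have hP' : ∀ g h, P (s.piecewise g h) ↔ P g := fun g h =>
    iff_of_eq (hP fun a ha => piecewise_eq_of_mem _ _ _ ha)
  have hQ' : ∀ g h, Q (s.piecewise g h) ↔ Q h := fun g h =>
    iff_of_eq (hQ fun a ha => piecewise_eq_of_notMem _ _ _ ha)
  refine card_nbij' σ σ ?_ ?_ (fun p _ => hσ p) (fun p _ => hσ p)
  · rintro ⟨g, h⟩
    simp +contextual [σ, hP', hQ']
  · rintro ⟨g, h⟩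
    simp +contextual [σ, hP', hQ']

lemma cubeProb_and {s : Finset α} {P Q : (α → Bool) → Prop}
    (hP : DependsOn P s) (hQ : DependsOn Q (↑s)ᶜ) :
    cubeProb (fun g => P g ∧ Q g) = cubeProb P * cubeProb Q := by
  have h := card_filter_and_mul hP hQ
  unfold cubeProb
  rw [div_mul_div_comm, eq_div_iff (by positivity), ← Nat.cast_mul, ← h]
  push_cast
  field_simp

theorem cubeProb_forall_mem {ι : Type*} (s : Finset ι)
    {R : ι → (α → Bool) → Prop} {D : ι → Finset α} (hR : ∀ i ∈ s, DependsOn (R i) (D i))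
    (hD : (s : Set ι).PairwiseDisjoint D) :
    cubeProb (fun g => ∀ i ∈ s, R i g) = ∏ i ∈ s, cubeProb (R i) := by
  induction s using Finset.induction_on with
  | empty => simp [cubeProb]
  | insert a s ha ih =>
    have hrest : DependsOn (fun g => ∀ i ∈ s, R i g) (↑(D a))ᶜ := by
      intro x y hxy
      refine propext (forall₂_congr fun i hi => iff_of_eq (hR i (mem_insert_of_mem hi) ?_))
      intro b hb
      refine hxy b fun hba => ?_
      have hia : i ≠ a := fun h => ha (h ▸ hi)
      exact disjoint_left.mp (hD (by simp [hi]) (by simp) hia) hb hba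
    simp only [forall_mem_insert, prod_insert ha]
    rw [cubeProb_and (hR a (mem_insert_self a s)) hrest,
      ih (fun i hi => hR i (mem_insert_of_mem hi)) (hD.subset (by simp))]

end BooleanCube

namespace RootedTree

variable {V : Type} [DecidableEq V] (T : RootedTree V)

lemma iterate_parent_mem_and_depth {v : V} (hv : v ∈ T.verts) {k : ℕ} (hk : k ≤ T.depth v) :
    T.parent^[k] v ∈ T.verts ∧ T.depth (T.parent^[k] v) = T.depth v - k := by
  induction k with
  | zero => exact ⟨hv, rfl⟩
  | succ k ih =>
    obtain ⟨hmem, hdepth⟩ := ih (by omega)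
    have hne : T.parent^[k] v ≠ T.root := fun h => by
      rw [h, T.depth_root] at hdepth
      omega
    have := T.depth_parent _ hmem hne
    rw [iterate_succ_apply']
    exact ⟨T.parent_mem _ hmem hne, by omega⟩

lemma mem_verts_of_mem_pathVerts {v w : V} (hv : v ∈ T.verts) (hw : w ∈ T.pathVerts v) :
    w ∈ T.verts := by
  obtain ⟨k, hk, rfl⟩ := mem_image.mp hw
  exact (T.iterate_parent_mem_and_depth hv (Nat.lt_succ_iff.mp (mem_range.mp hk))).1

lemma notMem_leaves_of_mem_pathVerts {v w : V} (hv : v ∈ T.verts) (hw : w ∈ T.pathVerts v)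
    (hwv : w ≠ v) : w ∉ T.leaves := by
  obtain ⟨_ | k, hk, rfl⟩ := mem_image.mp hw
  · exact absurd rfl hwv
  obtain ⟨hmem, hdepth⟩ :=
    T.iterate_parent_mem_and_depth hv (k := k) (by rw [mem_range] at hk; omega)
  have hne : T.parent^[k] v ≠ T.root := fun h => by
    rw [h, T.depth_root] at hdepth
    rw [mem_range] at hk
    omega
  have hchild : T.parent^[k] v ∈ T.children (T.parent^[k + 1] v) := by
    simp only [children, mem_filter]
    exact ⟨hmem, hne, (iterate_succ_apply' _ _ _).symm⟩
  intro hleaf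
  rw [(mem_filter.mp hleaf).2] at hchild
  exact notMem_empty _ hchild

end RootedTree

namespace BTB

variable {V : Type} [DecidableEq V] [Fintype V] {H : BTB V}

def IsLeafVar (H : BTB V) (v : V) : Prop := ∃ i j, H.IsCommonLeaf i j v

lemma IsCommonLeaf.eq_or_eq {i j k : Fin H.m} {ℓ : V} (h : H.IsCommonLeaf i j ℓ)
    (hk : ℓ ∈ (H.tree k).leaves) : k = i ∨ k = j := by
  have hsub : {i, j} ⊆ univ.filter fun k => ℓ ∈ (H.tree k).leaves := by
    simp [insert_subset_iff, h.2.1, h.2.2]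
  have heq := eq_of_subset_of_card_le hsub
    (by rw [H.leaf_two i ℓ h.2.1, card_pair h.1])
  have hk' : k ∈ univ.filter fun k => ℓ ∈ (H.tree k).leaves := by simpa using hk
  simpa [← heq] using hk'

lemma IsCommonLeaf.clauseVerts_eq {i j a b : Fin H.m} {ℓ : V} (h : H.IsCommonLeaf i j ℓ)
    (h' : H.IsCommonLeaf a b ℓ) : H.clauseVerts a b ℓ = H.clauseVerts i j ℓ := by
  rcases h.eq_or_eq h'.2.1 with rfl | rfl <;> rcases h.eq_or_eq h'.2.2 with rfl | rfl
  · exact absurd rfl h'.1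
  · rfl
  · exact union_comm _ _
  · exact absurd rfl h'.1

lemma not_isLeafVar_of_notMem_leaves {k : Fin H.m} {v : V} (hv : v ∈ (H.tree k).verts)
    (hnl : v ∉ (H.tree k).leaves) : ¬ H.IsLeafVar v := by
  rintro ⟨a, b, -, hla, -⟩
  by_cases hak : a = k
  · exact hnl (hak ▸ hla)
  · exact hnl (H.common_leaf a k hak v (mem_filter.mp hla).1 hv).2

lemma IsCommonLeaf.exists_of_mem_clauseVerts {i j : Fin H.m} {ℓ v : V}
    (h : H.IsCommonLeaf i j ℓ) (hv : v ∈ H.clauseVerts i j ℓ) :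
    ∃ k, (k = i ∨ k = j) ∧ v ∈ (H.tree k).verts ∧ (v ≠ ℓ → v ∉ (H.tree k).leaves) := by
  rcases mem_union.mp hv with hv | hv
  · have hℓ := (mem_filter.mp h.2.1).1
    exact ⟨i, .inl rfl, RootedTree.mem_verts_of_mem_pathVerts _ hℓ hv,
      RootedTree.notMem_leaves_of_mem_pathVerts _ hℓ hv⟩
  · have hℓ := (mem_filter.mp h.2.2).1
    exact ⟨j, .inr rfl, RootedTree.mem_verts_of_mem_pathVerts _ hℓ hv,
      RootedTree.notMem_leaves_of_mem_pathVerts _ hℓ hv⟩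

lemma IsCommonLeaf.not_isLeafVar_of_mem_clauseVerts {i j : Fin H.m} {ℓ v : V}
    (h : H.IsCommonLeaf i j ℓ) (hv : v ∈ H.clauseVerts i j ℓ) (hvℓ : v ≠ ℓ) :
    ¬ H.IsLeafVar v := by
  obtain ⟨k, -, hvk, hnl⟩ := h.exists_of_mem_clauseVerts hv
  exact not_isLeafVar_of_notMem_leaves hvk (hnl hvℓ)

/-- Leaves of extended trees have no siblings. -/
lemma Sibling.not_isLeafVar {v w : V} (h : H.Sibling v w) : ¬ H.IsLeafVar w := by
  obtain ⟨k, hv, hw, hvr, hwr, hvw, hpar⟩ := h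
  refine not_isLeafVar_of_notMem_leaves hw fun hleaf => hvw ?_
  have hvmem : v ∈ (H.tree k).children ((H.tree k).parent w) := by
    simp only [RootedTree.children, mem_filter]
    exact ⟨hv, hvr, hpar⟩
  rwa [H.extended k w hw hwr (mem_filter.mp hleaf).2, mem_singleton] at hvmem

lemma Sibling.mem_verts {v w : V} (h : H.Sibling v w) {k : Fin H.m}
    (hv : v ∈ (H.tree k).verts) (hnl : v ∉ (H.tree k).leaves) : w ∈ (H.tree k).verts := by
  obtain ⟨k', hvk', hwk', -⟩ := h
  by_cases hk : k' = k
  · exact hk ▸ hwk'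
  · exact absurd (H.common_leaf k' k hk v hvk' hv).2 hnl

end BTB

section TotalAssignments

variable {V : Type} [DecidableEq V] [Fintype V]

def toLits (f : V → Bool) : Finset (V × Bool) := univ.image fun v => (v, f v)

@[simp]
lemma mem_toLits {f : V → Bool} {v : V} {b : Bool} : (v, b) ∈ toLits f ↔ f v = b := by
  simp [toLits, eq_comm]

lemma toLits_injective : Injective (toLits : (V → Bool) → Finset (V × Bool)) := fun _ _ h =>
  funext fun _ => (mem_toLits.mp (h ▸ mem_toLits.mpr rfl)).symm

lemma assignsExactly_toLits (f : V → Bool) : AssignsExactly univ (toLits f) :=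
  ⟨fun _ _ => mem_univ _,
    fun v _ => ⟨f v, mem_toLits.mpr rfl, fun _ hb => (mem_toLits.mp hb).symm⟩⟩

lemma AssignsExactly.exists_toLits_eq {S : Finset (V × Bool)} (hS : AssignsExactly univ S) :
    ∃ f, toLits f = S := by
  refine ⟨fun v => decide ((v, true) ∈ S), ?_⟩
  ext ⟨v, b⟩
  obtain ⟨c, hc, huniq⟩ := hS.2 v (mem_univ v)
  have hmem : ∀ b, (v, b) ∈ S ↔ b = c := fun b => ⟨huniq b, fun h => h ▸ hc⟩
  simp only [mem_toLits, hmem]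
  cases b <;> cases c <;> decide

end TotalAssignments

namespace BTB

variable {V : Type} [DecidableEq V] [Fintype V] {H : BTB V}

def IsForced (H : BTB V) (f : V → Bool) (ℓ : V) : Prop :=
  ∃ i j, H.IsCommonLeaf i j ℓ ∧ ∀ v ∈ H.clauseVerts i j ℓ, v ≠ ℓ → f v = false

noncomputable def repair (H : BTB V) (g : V → Bool) (v : V) : Bool :=
  if H.IsForced g v then true else g v

lemma IsForced.isLeafVar {f : V → Bool} {ℓ : V} (h : H.IsForced f ℓ) : H.IsLeafVar ℓ :=
  let ⟨i, j, hℓ, _⟩ := h; ⟨i, j, hℓ⟩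

lemma IsCommonLeaf.isForced_iff {i j : Fin H.m} {ℓ : V} (h : H.IsCommonLeaf i j ℓ)
    {f : V → Bool} :
    H.IsForced f ℓ ↔ ∀ v ∈ H.clauseVerts i j ℓ, v ≠ ℓ → f v = false := by
  refine ⟨fun ⟨a, b, h', hf⟩ => ?_, fun hf => ⟨i, j, h, hf⟩⟩
  rwa [h.clauseVerts_eq h'] at hf

lemma isForced_congr {f g : V → Bool} (hfg : ∀ v, ¬ H.IsLeafVar v → f v = g v) (ℓ : V) :
    H.IsForced f ℓ ↔ H.IsForced g ℓ := by
  refine exists₂_congr fun i j => and_congr_right fun h => forall₂_congr fun v hv => ?_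
  exact imp_congr_right fun hvℓ => by rw [hfg v (h.not_isLeafVar_of_mem_clauseVerts hv hvℓ)]

lemma repair_of_not_isLeafVar {g : V → Bool} {v : V} (hv : ¬ H.IsLeafVar v) :
    H.repair g v = g v :=
  if_neg fun hf => hv hf.isLeafVar

lemma isForced_repair {g : V → Bool} (ℓ : V) : H.IsForced (H.repair g) ℓ ↔ H.IsForced g ℓ :=
  isForced_congr (fun _ hv => repair_of_not_isLeafVar hv) ℓ

lemma satisfiesPhi_toLits_repair (g : V → Bool) : H.SatisfiesPhi (toLits (H.repair g)) := by
  intro i j ℓ h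
  by_cases hg : ∃ v ∈ H.clauseVerts i j ℓ, g v = true
  · obtain ⟨v, hv, hgv⟩ := hg
    exact ⟨v, hv, by simp [repair, hgv]⟩
  · push Not at hg
    refine ⟨ℓ, mem_union_left _ (mem_image.mpr ⟨0, by simp, rfl⟩), ?_⟩
    simpa [repair] using Or.inl (h.isForced_iff.mpr fun v hv _ => by simpa using hg v hv)

lemma toLits_repair_mem_SATH (g : V → Bool) : toLits (H.repair g) ∈ H.SATH := by
  simp only [SATH, mem_filter, mem_univ, true_and]
  exact ⟨assignsExactly_toLits _, satisfiesPhi_toLits_repair g⟩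

lemma IsForced.eq_true {f : V → Bool} {ℓ : V} (hf : H.SatisfiesPhi (toLits f))
    (h : H.IsForced f ℓ) : f ℓ = true := by
  obtain ⟨i, j, hℓ, hfalse⟩ := h
  obtain ⟨v, hv, hfv⟩ := hf i j ℓ hℓ
  rw [mem_toLits] at hfv
  by_cases hvℓ : v = ℓ
  · rwa [← hvℓ]
  · simp [hfalse v hv hvℓ] at hfv

lemma fix_toLits {f : V → Bool} (hf : H.SatisfiesPhi (toLits f)) :
    H.Fix (toLits f) = ↑(univ.filter (H.IsForced f)) := by
  ext ℓ
  simp only [Fix, mem_toLits, coe_filter, mem_univ, true_and, Set.mem_ofPred_eq]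
  constructor
  · rintro ⟨i, j, h, -, hfalse⟩
    exact ⟨i, j, h, hfalse⟩
  · intro hforced
    have hℓ := hforced.eq_true hf
    obtain ⟨i, j, h, hfalse⟩ := hforced
    exact ⟨i, j, h, hℓ, hfalse⟩

lemma repair_eq_iff {f g : V → Bool} (hf : H.SatisfiesPhi (toLits f)) :
    H.repair g = f ↔ ∀ v, ¬ H.IsForced f v → g v = f v := by
  constructor
  · rintro rfl v hv
    rw [isForced_repair] at hv
    exact (if_neg hv).symm
  · intro hgf
    have hforced : ∀ v, H.IsForced g v ↔ H.IsForced f v :=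
      isForced_congr fun v hv => hgf v fun hf' => hv hf'.isLeafVar
    funext v
    by_cases hv : H.IsForced f v
    · rw [repair, if_pos ((hforced v).mpr hv), hv.eq_true hf]
    · rw [repair, if_neg (mt (hforced v).mp hv), hgf v hv]

lemma card_toLits_repair_eq {S : Finset (V × Bool)} (hS : S ∈ H.SATH) :
    #{g | toLits (H.repair g) = S} = 2 ^ (H.Fix S).ncard := by
  obtain ⟨hassign, hsat⟩ := (mem_filter.mp hS).2
  obtain ⟨f, rfl⟩ := hassign.exists_toLits_eq
  rw [fix_toLits hsat, Set.ncard_coe_finset, ← card_filter_eqOn_compl _ f]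
  congr 1
  ext g
  simp [toLits_injective.eq_iff, repair_eq_iff hsat]

lemma weight_eq (S : Finset (V × Bool)) :
    H.weight S = 2 ^ (H.Fix S).ncard / 2 ^ Fintype.card V := by
  have hle : (H.Fix S).ncard ≤ Fintype.card V := by
    simpa using Set.ncard_le_ncard (Set.subset_univ (H.Fix S))
  rw [weight, eq_div_iff (by positivity), one_div, inv_pow, ← Nat.sub_add_cancel hle, pow_add,
    Nat.sub_add_cancel hle, inv_mul_cancel_left₀ (by positivity)]

theorem Pr_eq_cubeProb (E : Finset (V × Bool) → Prop) :
    H.Pr E = cubeProb fun g => E (toLits (H.repair g)) := by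
  have hmaps : ∀ g ∈ (univ.filter fun g => E (toLits (H.repair g))),
      toLits (H.repair g) ∈ H.SATH.filter E := fun g hg =>
    mem_filter.mpr ⟨toLits_repair_mem_SATH g, (mem_filter.mp hg).2⟩
  rw [Pr, cubeProb, card_eq_sum_card_fiberwise hmaps, Nat.cast_sum, sum_div]
  refine sum_congr rfl fun S hS => ?_
  obtain ⟨hSAT, hE⟩ := mem_filter.mp hS
  have hfiber : #{g | E (toLits (H.repair g)) ∧ toLits (H.repair g) = S} =
      #{g | toLits (H.repair g) = S} :=
    congrArg card (filter_congr fun g _ => and_iff_right_of_imp fun h => h ▸ hE)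
  rw [weight_eq, filter_filter, hfiber, card_toLits_repair_eq hSAT]
  push_cast
  rfl

/-- The variables that `X_{i,j}` reads: the vertices of `T_i ∪ T_j` except the leaf variables
other than `ℓ_{i,j}`. -/
noncomputable def respectsSupport (H : BTB V) (e : Fin H.m × Fin H.m) : Finset V :=
  univ.filter fun x => (x ∈ (H.tree e.1).verts ∨ x ∈ (H.tree e.2).verts) ∧
    ∀ i j, H.IsCommonLeaf i j x → H.IsCommonLeaf e.1 e.2 x

lemma mem_respectsSupport_of_mem_verts {e : Fin H.m × Fin H.m} {k : Fin H.m} {x : V}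
    (hk : k = e.1 ∨ k = e.2) (hx : x ∈ (H.tree k).verts) (hnl : ¬ H.IsLeafVar x) :
    x ∈ H.respectsSupport e := by
  refine mem_filter.mpr ⟨mem_univ x, ?_, fun i j h => absurd ⟨i, j, h⟩ hnl⟩
  rcases hk with rfl | rfl
  exacts [.inl hx, .inr hx]

lemma IsCommonLeaf.mem_respectsSupport {e : Fin H.m × Fin H.m} {ℓ v : V}
    (h : H.IsCommonLeaf e.1 e.2 ℓ) (hv : v ∈ H.clauseVerts e.1 e.2 ℓ) :
    v ∈ H.respectsSupport e := by
  obtain ⟨k, hk, hvk, hnl⟩ := h.exists_of_mem_clauseVerts hv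
  by_cases hvℓ : v = ℓ
  · subst hvℓ
    refine mem_filter.mpr ⟨mem_univ v, ?_, fun _ _ _ => h⟩
    rcases hk with rfl | rfl
    exacts [.inl hvk, .inr hvk]
  · exact mem_respectsSupport_of_mem_verts hk hvk (not_isLeafVar_of_notMem_leaves hvk (hnl hvℓ))

lemma IsCommonLeaf.sibling_mem_respectsSupport {e : Fin H.m × Fin H.m} {ℓ v w : V}
    (h : H.IsCommonLeaf e.1 e.2 ℓ) (hv : v ∈ H.clauseVerts e.1 e.2 ℓ) (hvℓ : v ≠ ℓ)
    (hs : H.Sibling v w) : w ∈ H.respectsSupport e := by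
  obtain ⟨k, hk, hvk, hnl⟩ := h.exists_of_mem_clauseVerts hv
  exact mem_respectsSupport_of_mem_verts hk (hs.mem_verts hvk (hnl hvℓ)) hs.not_isLeafVar

lemma dependsOn_respects_toLits (e : Fin H.m × Fin H.m) :
    DependsOn (fun f => H.Respects e.1 e.2 (toLits f)) (H.respectsSupport e) := by
  suffices ∀ f g : V → Bool, (∀ x ∈ H.respectsSupport e, f x = g x) →
      H.Respects e.1 e.2 (toLits f) → H.Respects e.1 e.2 (toLits g) from
    fun f g hfg => propext ⟨this f g hfg, this g f fun x hx => (hfg x hx).symm⟩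
  rintro f g hfg ⟨ℓ, h, hfalse, htrue⟩
  refine ⟨ℓ, h, fun v hv hv₁ hv₂ => ?_, fun v hv hv₁ hv₂ hvℓ w hs => ?_⟩
  · simpa [← hfg v (h.mem_respectsSupport hv)] using hfalse v hv hv₁ hv₂
  · simpa [← hfg w (h.sibling_mem_respectsSupport hv hvℓ hs)] using htrue v hv hv₁ hv₂ hvℓ w hs

lemma repair_eqOn_respectsSupport {e : Fin H.m × Fin H.m} {g g' : V → Bool}
    (hgg' : ∀ x ∈ H.respectsSupport e, g x = g' x) :
    ∀ x ∈ H.respectsSupport e, H.repair g x = H.repair g' x := by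
  intro x hx
  by_cases hleaf : H.IsLeafVar x
  · obtain ⟨i, j, hij⟩ := hleaf
    have h := (mem_filter.mp hx).2.2 i j hij
    have hforced : H.IsForced g x ↔ H.IsForced g' x := by
      rw [h.isForced_iff, h.isForced_iff]
      refine forall₂_congr fun v hv => imp_congr_right fun hvx => ?_
      rw [hgg' v (h.mem_respectsSupport hv)]
    simp only [repair, hforced, hgg' x hx]
  · rw [repair_of_not_isLeafVar hleaf, repair_of_not_isLeafVar hleaf, hgg' x hx]

lemma dependsOn_respects_toLits_repair (e : Fin H.m × Fin H.m) :
    DependsOn (fun g => H.Respects e.1 e.2 (toLits (H.repair g))) (H.respectsSupport e) :=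
  fun _ _ hgg' => dependsOn_respects_toLits e (repair_eqOn_respectsSupport hgg')

/-- A vertex shared by the supports of two pseudoedges lies in two different trees, so it is
a common leaf; but then both pseudoedges join the same two trees. -/
lemma IsPseudomatching.pairwiseDisjoint_respectsSupport {M : Finset (Fin H.m × Fin H.m)}
    (hM : H.IsPseudomatching M) : (M : Set (Fin H.m × Fin H.m)).PairwiseDisjoint
      H.respectsSupport := by
  intro e he f hf hef
  obtain ⟨h11, h12, h21, h22⟩ := hM.2 e he f hf hef
  refine disjoint_left.mpr fun x hxe hxf => ?_
  obtain ⟨hte, hle⟩ := (mem_filter.mp hxe).2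
  obtain ⟨htf, hlf⟩ := (mem_filter.mp hxf).2
  have common : ∀ a b, a ≠ b → x ∈ (H.tree a).verts → x ∈ (H.tree b).verts → False :=
    fun a b hab hxa hxb => by
      have hab' := H.common_leaf a b hab x hxa hxb
      have hxe' := hle a b ⟨hab, hab'⟩
      rcases hxe'.eq_or_eq (hlf a b ⟨hab, hab'⟩).2.1 with h | h
      exacts [h11 h.symm, h21 h.symm]
  rcases hte with hxa | hxa <;> rcases htf with hxb | hxb
  exacts [common _ _ h11 hxa hxb, common _ _ h12 hxa hxb, common _ _ h21 hxa hxb,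
    common _ _ h22 hxa hxb]

end BTB

theorem statement_9_general (V : Type) [DecidableEq V] [Fintype V] (H : BTB V)
    (M : Finset (Fin H.m × Fin H.m))
    (hM : H.IsPseudomatching M)
    (M' : Finset (Fin H.m × Fin H.m)) (hM' : M' ⊆ M)
    (a : Fin H.m × Fin H.m → Bool) :
    H.Pr (fun S => ∀ e ∈ M', (H.Respects e.1 e.2 S ↔ a e = true)) =
      ∏ e ∈ M', H.Pr (fun S => H.Respects e.1 e.2 S ↔ a e = true) := by
  simp only [BTB.Pr_eq_cubeProb]
  exact cubeProb_forall_mem M'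
    (fun e _ _ _ hxy => congrArg (· ↔ a e = true) (BTB.dependsOn_respects_toLits_repair e hxy))
    (hM.pairwiseDisjoint_respectsSupport.subset hM')

/-- for any pseudomatching `M` of a pseudoexpander `H`, the indicator
variables `X_{i,j}`, `{t_i,t_j} ∈ M`, are mutually independent. -/
theorem statement_9 (V : Type) [DecidableEq V] [Fintype V] (H : BTB V)
    (hH : H.IsPseudoexpander) (M : Finset (Fin H.m × Fin H.m))
    (hM : H.IsPseudomatching M)
    (M' : Finset (Fin H.m × Fin H.m)) (hM' : M' ⊆ M)
    (a : Fin H.m × Fin H.m → Bool) :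
    H.Pr (fun S => ∀ e ∈ M', (H.Respects e.1 e.2 S ↔ a e = true)) =
      ∏ e ∈ M', H.Pr (fun S => H.Respects e.1 e.2 S ↔ a e = true) :=
  statement_9_general V H M hM M' hM' a

end NBPPaper
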